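/- arXiv:1110.0444 — 5 statements merged into one kernel-verified Lean document; each statement's English description precedes it below -/
import Mathlib

section
/- With the Levi-Civita connection ∇ of the 5-dimensional example (determined by the Koszul formula from the given brackets and metric), the operator x ↦ ∇ₓξ restricted to span(e₁,e₂,e₃,e₄) commutes with φ, i.e., ∇_{φx}ξ = φ(∇ₓξ) for all x, and moreover g(∇ₓξ, y) = g(∇_y ξ, x) for all x, y (the shape operator is g-symmetric). -/
open Finset

noncomputable section

/-- The standard basis of ℝ⁵; `e 4` plays the role of ξ. -/
def e (i : Fin 5) : Fin 5 → ℝ := Pi.single i 1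

/-- The Reeb vector ξ = e₅. -/
def xi : Fin 5 → ℝ := e 4

/-- The contact form η, dual to ξ. -/
def eta (x : Fin 5 → ℝ) : ℝ := x 4

/-- The structure endomorphism: φe₁ = e₃, φe₂ = e₄, φe₃ = -e₁, φe₄ = -e₂, φξ = 0. -/
def phi (x : Fin 5 → ℝ) : Fin 5 → ℝ := ![-(x 2), -(x 3), x 0, x 1, 0]

/-- The B-metric g = diag(1,1,-1,-1,1). -/
def gf (x y : Fin 5 → ℝ) : ℝ := x 0 * y 0 + x 1 * y 1 - x 2 * y 2 - x 3 * y 3 + x 4 * y 4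

/-- The signs εᵢ = g(eᵢ,eᵢ). -/
def eps : Fin 5 → ℝ := ![1, 1, -1, -1, 1]

/-- The operator x ↦ [x, ξ] on span(e₁,…,e₄), determined by the paper's commutators. -/
def D (l1 l2 l3 l4 m1 m3 : ℝ) (x : Fin 5 → ℝ) : Fin 5 → ℝ :=
  ![l1 * x 0 + m1 * x 1 - l3 * x 2 - m3 * x 3,
    l2 * x 0 - l1 * x 1 - l4 * x 2 + l3 * x 3,
    l3 * x 0 + m3 * x 1 + l1 * x 2 + m1 * x 3,
    l4 * x 0 - l3 * x 1 + l2 * x 2 - l1 * x 3,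
    0]

/-- The Lie bracket: span(e₁,…,e₄) is abelian, [x,ξ] = D x, extended bilinearly and
antisymmetrically. -/
def br (l1 l2 l3 l4 m1 m3 : ℝ) (x y : Fin 5 → ℝ) : Fin 5 → ℝ :=
  y 4 • D l1 l2 l3 l4 m1 m3 x - x 4 • D l1 l2 l3 l4 m1 m3 y

/-- The Levi-Civita connection via the Koszul formula
2g(∇ₓy, z) = g([x,y],z) + g([z,x],y) + g([z,y],x), recovered componentwise in the
orthogonal basis. -/
def nabla (l1 l2 l3 l4 m1 m3 : ℝ) (x y : Fin 5 → ℝ) : Fin 5 → ℝ :=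
  fun i => eps i * ((gf (br l1 l2 l3 l4 m1 m3 x y) (e i)
    + gf (br l1 l2 l3 l4 m1 m3 (e i) x) y
    + gf (br l1 l2 l3 l4 m1 m3 (e i) y) x) / 2)

/-- The curvature tensor R(x,y)z = ∇ₓ∇_y z - ∇_y∇ₓ z - ∇_{[x,y]} z. -/
def Rc (l1 l2 l3 l4 m1 m3 : ℝ) (x y z : Fin 5 → ℝ) : Fin 5 → ℝ :=
  nabla l1 l2 l3 l4 m1 m3 x (nabla l1 l2 l3 l4 m1 m3 y z)
    - nabla l1 l2 l3 l4 m1 m3 y (nabla l1 l2 l3 l4 m1 m3 x z)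
    - nabla l1 l2 l3 l4 m1 m3 (br l1 l2 l3 l4 m1 m3 x y) z

/-- The Ricci tensor ρ(y,z) = Σᵢ εᵢ g(R(eᵢ,y)z, eᵢ). -/
def rho (l1 l2 l3 l4 m1 m3 : ℝ) (y z : Fin 5 → ℝ) : ℝ :=
  ∑ i : Fin 5, eps i * gf (Rc l1 l2 l3 l4 m1 m3 (e i) y z) (e i)

/-- The scalar curvature τ = Σⱼ εⱼ ρ(eⱼ,eⱼ). -/
def tau (l1 l2 l3 l4 m1 m3 : ℝ) : ℝ :=
  ∑ j : Fin 5, eps j * rho l1 l2 l3 l4 m1 m3 (e j) (e j)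

/-- The associated Ricci tensor ρ*(y,z) = Σᵢ εᵢ g(R(eᵢ,y)z, φeᵢ). -/
def rhoStar (l1 l2 l3 l4 m1 m3 : ℝ) (y z : Fin 5 → ℝ) : ℝ :=
  ∑ i : Fin 5, eps i * gf (Rc l1 l2 l3 l4 m1 m3 (e i) y z) (phi (e i))

/-- The associated scalar curvature τ* = Σⱼ εⱼ ρ*(eⱼ,eⱼ). -/
def tauStar (l1 l2 l3 l4 m1 m3 : ℝ) : ℝ :=
  ∑ j : Fin 5, eps j * rhoStar l1 l2 l3 l4 m1 m3 (e j) (e j)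

/-- The fundamental tensor F(x,y,z) = g((∇ₓφ)y, z) = g(∇ₓ(φy) - φ(∇ₓy), z). -/
def Ften (l1 l2 l3 l4 m1 m3 : ℝ) (x y z : Fin 5 → ℝ) : ℝ :=
  gf (nabla l1 l2 l3 l4 m1 m3 x (phi y) - phi (nabla l1 l2 l3 l4 m1 m3 x y)) z

/-- The square norm ‖∇φ‖² = Σᵢₖ εᵢ εₖ g((∇_{eᵢ}φ)eₖ, (∇_{eᵢ}φ)eₖ). -/
def snPhi (l1 l2 l3 l4 m1 m3 : ℝ) : ℝ :=
  ∑ i : Fin 5, ∑ k : Fin 5, eps i * eps k *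
    gf (nabla l1 l2 l3 l4 m1 m3 (e i) (phi (e k)) - phi (nabla l1 l2 l3 l4 m1 m3 (e i) (e k)))
       (nabla l1 l2 l3 l4 m1 m3 (e i) (phi (e k)) - phi (nabla l1 l2 l3 l4 m1 m3 (e i) (e k)))

/-!
Since `span(e₁,…,e₄)` is an abelian ideal, `[z, x]` has no `ξ`-component, and the Koszul formula
reduces to `2 g(∇ₓξ, z) = g([x,ξ], z) + g([z,ξ], x)`: the operator `∇ξ` is the `g`-symmetric part
of `x ↦ [x, ξ]`. The commutation with `φ` then follows because `x ↦ [x, ξ]` commutes with `φ` and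
`φ` is `g`-symmetric.
-/

section

variable {l1 l2 l3 l4 m1 m3 : ℝ}

lemma eq_of_forall_gf_eq {u v : Fin 5 → ℝ} (h : ∀ z, gf u z = gf v z) : u = v := by
  funext i
  have hi := h (e i)
  fin_cases i <;> simpa [gf, e] using hi

lemma gf_phi_left (x y : Fin 5 → ℝ) : gf (phi x) y = gf x (phi y) := by
  simp only [gf, phi, Matrix.cons_val]
  ring

lemma D_phi_eq_phi_D (x : Fin 5 → ℝ) :
    D l1 l2 l3 l4 m1 m3 (phi x) = phi (D l1 l2 l3 l4 m1 m3 x) := by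
  funext i
  fin_cases i <;>
    simp only [D, phi, Fin.reduceFinMk, Fin.zero_eta, Fin.mk_one, Matrix.cons_val] <;> ring

lemma two_mul_gf_nabla (x y z : Fin 5 → ℝ) :
    2 * gf (nabla l1 l2 l3 l4 m1 m3 x y) z =
      gf (br l1 l2 l3 l4 m1 m3 x y) z + gf (br l1 l2 l3 l4 m1 m3 z x) y
        + gf (br l1 l2 l3 l4 m1 m3 z y) x := by
  simp only [nabla, gf, br, D, e, eps, Pi.sub_apply, Pi.smul_apply, smul_eq_mul, Matrix.cons_val,
    Pi.single_apply, Fin.reduceEq, if_true, if_false]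
  ring

lemma br_xi_right (x : Fin 5 → ℝ) : br l1 l2 l3 l4 m1 m3 x xi = D l1 l2 l3 l4 m1 m3 x := by
  funext i
  fin_cases i <;> simp [br, D, xi, e]

lemma gf_br_xi (x y : Fin 5 → ℝ) : gf (br l1 l2 l3 l4 m1 m3 x y) xi = 0 := by
  simp [gf, br, D, xi, e]

lemma two_mul_gf_nabla_xi (x z : Fin 5 → ℝ) :
    2 * gf (nabla l1 l2 l3 l4 m1 m3 x xi) z =
      gf (D l1 l2 l3 l4 m1 m3 x) z + gf (D l1 l2 l3 l4 m1 m3 z) x := by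
  rw [two_mul_gf_nabla, br_xi_right, br_xi_right, gf_br_xi, add_zero]

end

/-- The operator x ↦ ∇ₓξ commutes with φ and is g-symmetric. -/
theorem stmt12 (l1 l2 l3 l4 m1 m3 : ℝ) :
    (∀ x : Fin 5 → ℝ,
      nabla l1 l2 l3 l4 m1 m3 (phi x) xi = phi (nabla l1 l2 l3 l4 m1 m3 x xi)) ∧
    (∀ x y : Fin 5 → ℝ,
      gf (nabla l1 l2 l3 l4 m1 m3 x xi) y = gf (nabla l1 l2 l3 l4 m1 m3 y xi) x) := by
  have h := @two_mul_gf_nabla_xi l1 l2 l3 l4 m1 m3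
  refine ⟨fun x => eq_of_forall_gf_eq fun z => ?_, fun x y => by linarith [h x y, h y x]⟩
  have hφx := h (phi x) z
  rw [D_phi_eq_phi_D, gf_phi_left, ← gf_phi_left (D _ _ _ _ _ _ z), ← D_phi_eq_phi_D] at hφx
  rw [gf_phi_left]
  linarith [h x (phi z)]
end
end

section
/- In the 5-dimensional Lie group example, the fundamental tensor F(x,y,z) = g((∇ₓφ)y, z) has nonzero components (up to its symmetries) only F₁₁₅ = -F₂₂₅ = -F₃₃₅ = F₄₄₅ = λ₃, F₁₃₅ = -F₂₄₅ = λ₁, F₁₄₅ = F₂₃₅ = ½(λ₂+μ₁), F₁₂₅ = -F₃₄₅ = ½(λ₄+μ₃), where Fᵢⱼ₅ = F(eᵢ, eⱼ, ξ). In particular F(ξ, y, z) = 0 for all y, z, and F(x,y,ξ) is symmetric in x, y and satisfies F(x,y,ξ) = -F(φx, φy, ξ) on span(e₁,…,e₄). -/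
/-!
Write `D x = [x, ξ]`. Since `φ` takes values in `ker η` and no bracket has a `ξ`-component,
the Koszul formula reduces `F(x, y, ξ) = g(∇ₓ(φy), ξ)` to `-½ (g(Dx, φy) + g(x, D(φy)))`.
Expanding this in coordinates gives an explicit bilinear form in the `e₁,…,e₄`-components,
visibly symmetric and negated by `φ`; its values on basis vectors are the listed components.
The vanishing of `F(ξ, ·, ·)` and of `F` on `ker η` are direct Koszul computations.
-/

open Finset

noncomputable section

/-- `F(x, y, ξ)` in coordinates on `span(e₁,…,e₄)`. -/
def Fxi (l1 l2 l3 l4 m1 m3 : ℝ) (x y : Fin 5 → ℝ) : ℝ :=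
  l3 * (x 0 * y 0 - x 1 * y 1 - x 2 * y 2 + x 3 * y 3)
    + l1 * (x 0 * y 2 + x 2 * y 0 - x 1 * y 3 - x 3 * y 1)
    + (l2 + m1) / 2 * (x 0 * y 3 + x 3 * y 0 + x 1 * y 2 + x 2 * y 1)
    + (l4 + m3) / 2 * (x 0 * y 1 + x 1 * y 0 - x 2 * y 3 - x 3 * y 2)

section

variable (l1 l2 l3 l4 m1 m3 : ℝ)

lemma Ften_apply_xi_eq_koszul (x y : Fin 5 → ℝ) :
    Ften l1 l2 l3 l4 m1 m3 x y xi =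
      -(gf (D l1 l2 l3 l4 m1 m3 x) (phi y) + gf x (D l1 l2 l3 l4 m1 m3 (phi y))) / 2 := by
  simp only [Ften, nabla, gf, br, D, e, phi, eps, xi, Pi.single_apply, Pi.sub_apply,
    Pi.smul_apply, smul_eq_mul, Matrix.cons_val, Fin.isValue, Fin.reduceEq, if_true, if_false]
  ring

lemma Ften_apply_xi (x y : Fin 5 → ℝ) :
    Ften l1 l2 l3 l4 m1 m3 x y xi = Fxi l1 l2 l3 l4 m1 m3 x y := by
  rw [Ften_apply_xi_eq_koszul]
  simp only [Fxi, gf, D, phi, Matrix.cons_val, Fin.isValue]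
  ring

lemma Fxi_comm (x y : Fin 5 → ℝ) :
    Fxi l1 l2 l3 l4 m1 m3 x y = Fxi l1 l2 l3 l4 m1 m3 y x := by
  simp only [Fxi]
  ring

lemma Fxi_phi_phi (x y : Fin 5 → ℝ) :
    Fxi l1 l2 l3 l4 m1 m3 (phi x) (phi y) = -Fxi l1 l2 l3 l4 m1 m3 x y := by
  simp only [Fxi, phi, Matrix.cons_val, Fin.isValue]
  ring

lemma Ften_xi_left (y z : Fin 5 → ℝ) : Ften l1 l2 l3 l4 m1 m3 xi y z = 0 := by
  simp only [Ften, nabla, gf, br, D, e, phi, eps, xi, Pi.single_apply, Pi.sub_apply,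
    Pi.smul_apply, smul_eq_mul, Matrix.cons_val, Fin.isValue, Fin.reduceEq, if_true, if_false]
  ring

lemma Ften_eq_zero_of_eta_eq_zero {x y z : Fin 5 → ℝ}
    (hx : eta x = 0) (hy : eta y = 0) (hz : eta z = 0) :
    Ften l1 l2 l3 l4 m1 m3 x y z = 0 := by
  simp only [eta] at hx hy hz
  simp [Ften, nabla, gf, br, D, e, phi, eps, hx, hy, hz]

end

lemma eta_e_castSucc (i : Fin 4) : eta (e i.castSucc) = 0 :=
  Pi.single_eq_of_ne (Fin.castSucc_lt_last i).ne' 1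

/-- The nonzero components of F are exactly the listed Fᵢⱼ₅, and
F(ξ,·,·) = 0, F(·,·,ξ) is symmetric and satisfies F(φx,φy,ξ) = -F(x,y,ξ). -/
theorem stmt14 (l1 l2 l3 l4 m1 m3 : ℝ) :
    Ften l1 l2 l3 l4 m1 m3 (e 0) (e 0) xi = l3 ∧
    Ften l1 l2 l3 l4 m1 m3 (e 1) (e 1) xi = -l3 ∧
    Ften l1 l2 l3 l4 m1 m3 (e 2) (e 2) xi = -l3 ∧
    Ften l1 l2 l3 l4 m1 m3 (e 3) (e 3) xi = l3 ∧
    Ften l1 l2 l3 l4 m1 m3 (e 0) (e 2) xi = l1 ∧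
    Ften l1 l2 l3 l4 m1 m3 (e 1) (e 3) xi = -l1 ∧
    Ften l1 l2 l3 l4 m1 m3 (e 0) (e 3) xi = (l2 + m1) / 2 ∧
    Ften l1 l2 l3 l4 m1 m3 (e 1) (e 2) xi = (l2 + m1) / 2 ∧
    Ften l1 l2 l3 l4 m1 m3 (e 0) (e 1) xi = (l4 + m3) / 2 ∧
    Ften l1 l2 l3 l4 m1 m3 (e 2) (e 3) xi = -((l4 + m3) / 2) ∧
    (∀ y z : Fin 5 → ℝ, Ften l1 l2 l3 l4 m1 m3 xi y z = 0) ∧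
    (∀ x y : Fin 5 → ℝ, Ften l1 l2 l3 l4 m1 m3 x y xi = Ften l1 l2 l3 l4 m1 m3 y x xi) ∧
    (∀ x y : Fin 5 → ℝ, eta x = 0 → eta y = 0 →
      Ften l1 l2 l3 l4 m1 m3 (phi x) (phi y) xi = -Ften l1 l2 l3 l4 m1 m3 x y xi) ∧
    (∀ i j k : Fin 4,
      Ften l1 l2 l3 l4 m1 m3 (e i.castSucc) (e j.castSucc) (e k.castSucc) = 0) := by
  simp only [Ften_apply_xi]
  refine ⟨?_, ?_, ?_, ?_, ?_, ?_, ?_, ?_, ?_, ?_, Ften_xi_left _ _ _ _ _ _,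
    fun x y => Fxi_comm _ _ _ _ _ _ x y, fun x y _ _ => Fxi_phi_phi _ _ _ _ _ _ x y,
    fun i j k => Ften_eq_zero_of_eta_eq_zero _ _ _ _ _ _
      (eta_e_castSucc i) (eta_e_castSucc j) (eta_e_castSucc k)⟩ <;>
  simp [Fxi, e]
end
end

section
/- In the 5-dimensional Lie group example, F(x,y,z) = η(y)F(x,z,ξ) + η(z)F(x,y,ξ) holds for all x, y, z in 𝔤, where F(x,y,z) = g((∇ₓφ)y, z) and η is the dual of ξ, and furthermore θ(z) := Σᵢ εᵢ F(eᵢ, eᵢ, z) = 0 and θ*(z) := Σᵢ εᵢ F(eᵢ, φeᵢ, z) = 0 for all z (where εᵢ = g(eᵢ,eᵢ)). Hence the manifold belongs to class F₆. -/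
open Finset

noncomputable section

/-! The tensor is governed by the single form `A(x, y) = F(x, y, ξ)`: one has
`F(x, y, z) = η(y) A(x, z) + η(z) A(x, y)`. As `A` vanishes on `ξ` and `η ∘ φ = 0`, the Lee forms
reduce to `θ(z) = η(z) Σ εᵢ A(eᵢ, eᵢ)` and `θ*(z) = η(z) Σ εᵢ A(eᵢ, φeᵢ)`, and in both traces the
four terms cancel in pairs. -/

/-- The form `F(x, y, ξ) = -g(φy, ∇ₓξ)`, where `∇ₓξ` is the `g`-symmetric part of
`x ↦ [x, ξ]`. -/
def xiForm (l1 l2 l3 l4 m1 m3 : ℝ) (x y : Fin 5 → ℝ) : ℝ :=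
  l1 * (x 0 * y 2 + x 2 * y 0 - x 1 * y 3 - x 3 * y 1)
    + l3 * (x 0 * y 0 - x 1 * y 1 - x 2 * y 2 + x 3 * y 3)
    + (l2 + m1) / 2 * (x 0 * y 3 + x 3 * y 0 + x 1 * y 2 + x 2 * y 1)
    + (l4 + m3) / 2 * (x 0 * y 1 + x 1 * y 0 - x 2 * y 3 - x 3 * y 2)

section

variable (l1 l2 l3 l4 m1 m3 : ℝ)

theorem Ften_eq_xiForm (x y z : Fin 5 → ℝ) :
    Ften l1 l2 l3 l4 m1 m3 x y z
      = eta y * xiForm l1 l2 l3 l4 m1 m3 x z + eta z * xiForm l1 l2 l3 l4 m1 m3 x y := by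
  simp only [Ften, nabla, gf, phi, br, D, e, eps, eta, xiForm, Pi.sub_apply, Pi.smul_apply,
    smul_eq_mul, Pi.single_apply, Matrix.cons_val_zero, Matrix.cons_val_one, Matrix.cons_val_two,
    Matrix.cons_val_three, Matrix.cons_val_four, Matrix.head_cons, Matrix.tail_cons, Fin.isValue,
    Fin.reduceEq, if_true, if_false]
  ring

theorem xiForm_xi_left (y : Fin 5 → ℝ) : xiForm l1 l2 l3 l4 m1 m3 xi y = 0 := by
  simp [xiForm, xi, e]

theorem xiForm_xi_right (x : Fin 5 → ℝ) : xiForm l1 l2 l3 l4 m1 m3 x xi = 0 := by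
  simp [xiForm, xi, e]

theorem Ften_xi (x y : Fin 5 → ℝ) :
    Ften l1 l2 l3 l4 m1 m3 x y xi = xiForm l1 l2 l3 l4 m1 m3 x y := by
  rw [Ften_eq_xiForm, xiForm_xi_right]
  simp [eta, xi, e]

theorem sum_eps_xiForm_diag : ∑ i : Fin 5, eps i * xiForm l1 l2 l3 l4 m1 m3 (e i) (e i) = 0 := by
  simp [Fin.sum_univ_five, eps, xiForm, e, Pi.single_apply]

theorem sum_eps_xiForm_phi :
    ∑ i : Fin 5, eps i * xiForm l1 l2 l3 l4 m1 m3 (e i) (phi (e i)) = 0 := by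
  simp [Fin.sum_univ_five, eps, xiForm, e, phi, Pi.single_apply]

theorem sum_eps_Ften_diag (z : Fin 5 → ℝ) :
    ∑ i : Fin 5, eps i * Ften l1 l2 l3 l4 m1 m3 (e i) (e i) z
      = xiForm l1 l2 l3 l4 m1 m3 xi z
        + eta z * ∑ i : Fin 5, eps i * xiForm l1 l2 l3 l4 m1 m3 (e i) (e i) := by
  simp only [Fin.sum_univ_five, Ften_eq_xiForm, eps, eta, xi, e, Pi.single_apply, Matrix.cons_val,
    Fin.isValue, Fin.reduceEq, if_true, if_false]
  ring

theorem sum_eps_Ften_phi (z : Fin 5 → ℝ) :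
    ∑ i : Fin 5, eps i * Ften l1 l2 l3 l4 m1 m3 (e i) (phi (e i)) z
      = eta z * ∑ i : Fin 5, eps i * xiForm l1 l2 l3 l4 m1 m3 (e i) (phi (e i)) := by
  simp only [Fin.sum_univ_five, Ften_eq_xiForm, eps, eta, phi, e, Pi.single_apply,
    Matrix.cons_val, Fin.isValue, Fin.reduceEq, if_true, if_false]
  ring

end

/-- F(x,y,z) = η(y)F(x,z,ξ) + η(z)F(x,y,ξ) holds, and the Lee forms
θ and θ* vanish identically; hence the manifold is of class F₆. -/
theorem stmt15 (l1 l2 l3 l4 m1 m3 : ℝ) :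
    (∀ x y z : Fin 5 → ℝ,
      Ften l1 l2 l3 l4 m1 m3 x y z
        = eta y * Ften l1 l2 l3 l4 m1 m3 x z xi + eta z * Ften l1 l2 l3 l4 m1 m3 x y xi) ∧
    (∀ z : Fin 5 → ℝ, ∑ i : Fin 5, eps i * Ften l1 l2 l3 l4 m1 m3 (e i) (e i) z = 0) ∧
    (∀ z : Fin 5 → ℝ, ∑ i : Fin 5, eps i * Ften l1 l2 l3 l4 m1 m3 (e i) (phi (e i)) z = 0) := by
  refine ⟨fun x y z => ?_, fun z => ?_, fun z => ?_⟩
  · rw [Ften_eq_xiForm, Ften_xi, Ften_xi]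
  · rw [sum_eps_Ften_diag, xiForm_xi_left, sum_eps_xiForm_diag, mul_zero, add_zero]
  · rw [sum_eps_Ften_phi, sum_eps_xiForm_phi, mul_zero]
end
end

section
/- In the 5-dimensional Lie group example with parameters satisfying λ₁ = λ₃ ≠ 0, μ₁ = -λ₂, μ₃ = -λ₄, the manifold is scalar flat (τ = 0) and isotropic-F₀ (‖∇φ‖² = 0) but is not an F₀-manifold (the tensor F is not identically zero). -/
/-! In the basis e₁,…,e₄,ξ everything is a polynomial in the structure constants: τ and ‖∇φ‖²
are multiples of `4 (λ₃² - λ₁²) - (λ₂ + μ₁)² + (λ₄ + μ₃)²`, which vanishes under the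
hypotheses, while `F(e₁, e₁, ξ) = λ₃ = λ₁ ≠ 0`. With the normalisations of `tau` and `snPhi`,
the factor 2 between the two sits on ‖∇φ‖² rather than on τ as in the paper. -/

open Finset

noncomputable section

theorem tau_eq (l1 l2 l3 l4 m1 m3 : ℝ) :
    tau l1 l2 l3 l4 m1 m3 = 4 * (l3 ^ 2 - l1 ^ 2) - (l2 + m1) ^ 2 + (l4 + m3) ^ 2 := by
  simp only [tau, rho, Rc, nabla, br, D, gf, eps, e, Fin.sum_univ_five, Pi.single_apply,
    Pi.sub_apply, Pi.smul_apply, smul_eq_mul, Matrix.cons_val, Fin.reduceEq, ↓reduceIte,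
    mul_zero, zero_mul, mul_one, one_mul, add_zero, zero_add, sub_zero, zero_sub, sub_self, zero_div]
  ring

theorem snPhi_eq (l1 l2 l3 l4 m1 m3 : ℝ) :
    snPhi l1 l2 l3 l4 m1 m3 = 2 * (4 * (l3 ^ 2 - l1 ^ 2) - (l2 + m1) ^ 2 + (l4 + m3) ^ 2) := by
  simp only [snPhi, nabla, phi, br, D, gf, eps, e, Fin.sum_univ_five, Pi.single_apply,
    Pi.sub_apply, Pi.smul_apply, smul_eq_mul, Matrix.cons_val, Fin.reduceEq, ↓reduceIte,
    mul_zero, zero_mul, mul_one, one_mul, add_zero, zero_add, sub_zero, zero_sub, sub_self, zero_div]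
  ring

theorem Ften_e_zero_e_zero_e_four (l1 l2 l3 l4 m1 m3 : ℝ) :
    Ften l1 l2 l3 l4 m1 m3 (e 0) (e 0) (e 4) = l3 := by
  simp only [Ften, nabla, phi, br, D, gf, eps, e, Pi.single_apply,
    Pi.sub_apply, Pi.smul_apply, smul_eq_mul, Matrix.cons_val, Fin.reduceEq, ↓reduceIte,
    mul_zero, zero_mul, mul_one, one_mul, add_zero, zero_add, sub_zero, zero_sub, sub_self, zero_div]
  ring

/-- If λ₁ = λ₃ ≠ 0, μ₁ = -λ₂, μ₃ = -λ₄, then the manifold is scalar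
flat and isotropic-F₀ but not an F₀-manifold. -/
theorem stmt17 (l1 l2 l3 l4 m1 m3 : ℝ)
    (h13 : l1 = l3) (h0 : l1 ≠ 0) (hm1 : m1 = -l2) (hm3 : m3 = -l4) :
    tau l1 l2 l3 l4 m1 m3 = 0 ∧
    snPhi l1 l2 l3 l4 m1 m3 = 0 ∧
    ¬(∀ x y z : Fin 5 → ℝ, Ften l1 l2 l3 l4 m1 m3 x y z = 0) := by
  subst h13 hm1 hm3
  refine ⟨by rw [tau_eq]; ring, by rw [snPhi_eq]; ring, fun hF => h0 ?_⟩
  simpa only [Ften_e_zero_e_zero_e_four] using hF (e 0) (e 0) (e 4)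
end
end

section
/- Let h be a symmetric bilinear form on a real vector space V equipped with an almost contact B-metric structure (φ, ξ, η, g), such that h is hybrid with respect to φ (h(φx, y) = h(x, φy)) and h(x, ξ) = 0 for all x. Define T(x,y,z,w) = (h⊙h)(x,y,z,w) + (h⊙h)(x,y,φz,φw). Then T satisfies T(φx, φy, z, w) = T(x, y, z, w) whenever x, y ∈ ker η, and T has the symmetries T(x,y,z,w) = -T(y,x,z,w) = -T(x,y,w,z). -/
/-- For a symmetric φ-hybrid bilinear form h with h(·,ξ) = 0 on an
almost contact B-metric space, T(x,y,z,w) := (h⊙h)(x,y,z,w) + (h⊙h)(x,y,φz,φw)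
satisfies T(φx,φy,z,w) = T(x,y,z,w) for x,y ∈ ker η, and is antisymmetric in the
first and in the last pair of arguments. -/
theorem stmt19 {V : Type*} [AddCommGroup V] [Module ℝ V]
    (φ : V →ₗ[ℝ] V) (ξ : V) (η : V →ₗ[ℝ] ℝ) (g : V →ₗ[ℝ] V →ₗ[ℝ] ℝ)
    (hgsymm : ∀ x y, g x y = g y x)
    (h1 : φ ξ = 0)
    (h2 : ∀ x, φ (φ x) = -x + η x • ξ)
    (h3 : ∀ x, η (φ x) = 0)
    (h4 : η ξ = 1)
    (h5 : ∀ x y, g (φ x) (φ y) = -g x y + η x * η y)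
    (h : V →ₗ[ℝ] V →ₗ[ℝ] ℝ)
    (hsym : ∀ x y, h x y = h y x)
    (hhyb : ∀ x y, h (φ x) y = h x (φ y))
    (hxi : ∀ x, h x ξ = 0) :
    let T : V → V → V → V → ℝ := fun x y z w =>
      2 * (h x z * h y w - h y z * h x w)
        + 2 * (h x (φ z) * h y (φ w) - h y (φ z) * h x (φ w))
    (∀ x y z w, η x = 0 → η y = 0 → T (φ x) (φ y) z w = T x y z w) ∧
    (∀ x y z w, T x y z w = -T y x z w) ∧
    (∀ x y z w, T x y z w = -T x y w z) := by
  intro T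
  have key : ∀ x z : V, h (φ x) (φ z) = -h x z := by
    intro x z
    rw [hhyb, h2, map_add, map_neg, map_smul, hxi]
    simp
  refine ⟨?_, ?_, ?_⟩
  · intro x y z w _ _
    show 2 * (h (φ x) z * h (φ y) w - h (φ y) z * h (φ x) w)
        + 2 * (h (φ x) (φ z) * h (φ y) (φ w) - h (φ y) (φ z) * h (φ x) (φ w))
      = _
    rw [key, key, key, key, hhyb, hhyb, hhyb, hhyb]
    show _ = 2 * (h x z * h y w - h y z * h x w)
        + 2 * (h x (φ z) * h y (φ w) - h y (φ z) * h x (φ w))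
    ring
  · intro x y z w; show _ = -(2 * _ + 2 * _); ring
  · intro x y z w
    show 2 * (h x z * h y w - h y z * h x w)
        + 2 * (h x (φ z) * h y (φ w) - h y (φ z) * h x (φ w))
      = -(2 * (h x w * h y z - h y w * h x z)
        + 2 * (h x (φ w) * h y (φ z) - h y (φ w) * h x (φ z)))
    ring
end
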